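/- arXiv:1810.03488 — 2 statements merged into one kernel-verified Lean document; each statement's English description precedes it below -/
import Mathlib

section
/- Let β, σ_d, K > 0 and let g(t) = K((β+σ_d)e^{−t/β}/σ_d + t/σ_d − β/σ_d − 1) for t ≥ 0. For any P̄ ≥ 0, the value t* = β + σ_d + P̄σ_d/K + β·W₀(−((β+σ_d)/β)·e^{−(K(β+σ_d)+P̄σ_d)/(Kβ)}) satisfies g(t*) = P̄, where W₀ is the principal branch of the Lambert W function. -/
/-- Inversion of the lower bound `g(t) = K((β+σ_d)e^{−t/β}/σ_d + t/σ_d − β/σ_d − 1)` via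
the principal branch `W₀` of the Lambert W function. -/
theorem stmt_6 (β σd K P : ℝ) (hβ : 0 < β) (hσd : 0 < σd) (hK : 0 < K) (hP : 0 ≤ P)
    (W : ℝ → ℝ)
    (hW : ∀ x : ℝ, -Real.exp (-1) ≤ x → (-1 ≤ W x ∧ W x * Real.exp (W x) = x)) :
    (fun t : ℝ => K * ((β + σd) * Real.exp (-t / β) / σd + t / σd - β / σd - 1))
        (β + σd + P * σd / K
          + β * W (-((β + σd) / β) * Real.exp (-(K * (β + σd) + P * σd) / (K * β)))) = P := by
  have hβ' : β ≠ 0 := hβ.ne'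
  have hK' : K ≠ 0 := hK.ne'
  have hσ' : σd ≠ 0 := hσd.ne'
  set a : ℝ := (β + σd) / β with ha
  set E : ℝ := Real.exp (-(K * (β + σd) + P * σd) / (K * β)) with hE
  have hEeq : E = Real.exp (-a) * Real.exp (-(P * σd / (K * β))) := by
    rw [hE, ← Real.exp_add]
    congr 1
    rw [ha]
    field_simp
    ring
  have ha1 : 1 ≤ a := by
    rw [ha, le_div_iff₀ hβ]; linarith
  have haexp : a * Real.exp (-a) ≤ Real.exp (-1) := by
    have h1 : a ≤ Real.exp (a - 1) := by
      have := Real.add_one_le_exp (a - 1); linarith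
    calc a * Real.exp (-a) ≤ Real.exp (a - 1) * Real.exp (-a) :=
          mul_le_mul_of_nonneg_right h1 (Real.exp_nonneg _)
      _ = Real.exp (-1) := by rw [← Real.exp_add]; ring_nf
  have hEle : a * E ≤ Real.exp (-1) := by
    rw [hEeq]
    have h2 : Real.exp (-(P * σd / (K * β))) ≤ 1 := by
      rw [Real.exp_le_one_iff]
      have : 0 ≤ P * σd / (K * β) := by positivity
      linarith
    have h3 : 0 ≤ a * Real.exp (-a) := by positivity
    calc a * (Real.exp (-a) * Real.exp (-(P * σd / (K * β))))
        = (a * Real.exp (-a)) * Real.exp (-(P * σd / (K * β))) := by ring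
      _ ≤ (a * Real.exp (-a)) * 1 := by
          exact mul_le_mul_of_nonneg_left h2 h3
      _ ≤ Real.exp (-1) := by linarith
  have hx : -Real.exp (-1) ≤ -a * E := by nlinarith
  obtain ⟨hw1, hw2⟩ := hW (-a * E) hx
  set w := W (-a * E) with hwdef
  have hww : w = Real.exp (-w) * (-a * E) := by
    have h := congrArg (fun y => Real.exp (-w) * y) hw2
    rw [← h, ← mul_assoc, mul_comm (Real.exp (-w)) w, mul_assoc, ← Real.exp_add] at *
    simpa using h
  have h4 : a * E * Real.exp (-w) = -w := by linear_combination hww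
  have hba : β * a = β + σd := by rw [ha]; field_simp
  have hkey : (β + σd) * (E * Real.exp (-w)) = -β * w := by
    linear_combination β * h4 - E * Real.exp (-w) * hba
  have hexp : Real.exp (-(β + σd + P * σd / K + β * w) / β) = E * Real.exp (-w) := by
    rw [hE, ← Real.exp_add]
    congr 1
    field_simp
    ring
  simp only
  rw [hexp, hkey]
  field_simp
  ring
end

section
/- Let β, σ_d, K > 0 and P̄ ≥ 0. Then σ^L_{P̄} ≤ σ^U_{P̄}, where σ^L_{P̄} = β + P̄σ_d/K + βW₀(−e^{−P̄σ_d/(Kβ)−1}) and σ^U_{P̄} = β + σ_d + P̄σ_d/K + βW₀(−((β+σ_d)/β)e^{−(K(β+σ_d)+P̄σ_d)/(Kβ)}). -/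
open Real Set

/- Both times have the form `a + β W₀(x)`. Since `u ↦ u eᵘ` is increasing on `[-1, ∞)`, the
principal branch `W₀` is monotone, and `t e⁻ᵗ ≤ e⁻¹` with `t = (β + σ_d)/β` shows that the
argument of `W₀` in `σ^U` is at least the one in `σ^L`; the constant parts differ by `σ_d ≥ 0`. -/

lemma mul_exp_strictMonoOn : StrictMonoOn (fun u : ℝ => u * exp u) (Ici (-1)) := by
  have h := mul_log_strictMonoOn.comp (exp_strictMono.strictMonoOn (Ici (-1)))
    fun _ hu => exp_le_exp.2 hu
  simpa only [Function.comp_def, log_exp, mul_comm] using h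

lemma monotoneOn_of_mul_exp_eq {W : ℝ → ℝ}
    (hW : ∀ x : ℝ, -exp (-1) ≤ x → (-1 ≤ W x ∧ W x * exp (W x) = x)) :
    MonotoneOn W (Ici (-exp (-1))) := by
  intro x hx y hy hxy
  obtain ⟨hx₁, hx₂⟩ := hW x hx
  obtain ⟨hy₁, hy₂⟩ := hW y hy
  refine (mul_exp_strictMonoOn.le_iff_le hx₁ hy₁).1 ?_
  simpa only [hx₂, hy₂] using hxy

lemma neg_exp_neg_sub_one_le (t c : ℝ) : -exp (-c - 1) ≤ -t * (exp (-t) * exp (-c)) := by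
  have h := mul_le_mul_of_nonneg_right (mul_exp_neg_le_exp_neg_one t) (exp_pos (-c)).le
  rw [sub_eq_neg_add, exp_add]
  linarith

/-- `σ^L_{P̄} ≤ σ^U_{P̄}` for the Lambert-W expressions bounding the time to accumulate
an average of `P̄` droplets over `K` servers. -/
theorem stmt_14 (β σd K P : ℝ) (hβ : 0 < β) (hσd : 0 < σd) (hK : 0 < K) (hP : 0 ≤ P)
    (W : ℝ → ℝ)
    (hW : ∀ x : ℝ, -Real.exp (-1) ≤ x → (-1 ≤ W x ∧ W x * Real.exp (W x) = x)) :
    β + P * σd / K + β * W (-Real.exp (-(P * σd / (K * β)) - 1))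
      ≤ β + σd + P * σd / K
          + β * W (-((β + σd) / β) * Real.exp (-(K * (β + σd) + P * σd) / (K * β))) := by
  set c := P * σd / (K * β)
  set t := (β + σd) / β
  have hc : 0 ≤ c := by positivity
  have hexponent : -(K * (β + σd) + P * σd) / (K * β) = -t + -c := by
    simp only [t, c]
    field_simp
    ring
  have hL : -exp (-1) ≤ -exp (-c - 1) := neg_le_neg (exp_le_exp.2 (by linarith))
  have hLU : -exp (-c - 1) ≤ -t * exp (-(K * (β + σd) + P * σd) / (K * β)) := by
    rw [hexponent, exp_add]
    exact neg_exp_neg_sub_one_le t c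
  have hW_le := monotoneOn_of_mul_exp_eq hW hL (hL.trans hLU) hLU
  linarith [mul_le_mul_of_nonneg_left hW_le hβ.le]
end
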